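/- Let V be a finite-dimensional real vector space, Q a V-parallel space, s ∈ ℝ, p ∈ Q, and v ∈ V. Let I^v_{s,p} be the union of all intervals I ⊆ ℝ containing s on which there exists a motion with constant velocity v taking the value p at s. Then I^v_{s,p} is an interval containing s, and there exists a unique motion γ^v_{s,p} : I^v_{s,p} → Q with constant velocity v and γ^v_{s,p}(s) = p; it extends every motion with constant velocity v that is defined on an interval containing s and takes the value p at s. -/

import Mathlib

/-! Two motions of velocity `v` that agree at one time agree on the (interval) intersection of
their domains: the set where they agree is open because each is affine in every chart and charts
are injective, and closed because `Q` is Hausdorff. So all motions through `p` at time `s` patch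
to one function on the union of their domains. It is again a motion, since any two times of the
union lie in the domain of a single motion, or in two of them glued at `s`. -/

open Set Filter Topology Pointwise

structure ParallelSpace (V : Type*) (Q : Type*)
    [NormedAddCommGroup V] [NormedSpace ℝ V] [TopologicalSpace Q] where
  ι : Type*
  chart : ι → Set Q
  chart_open : ∀ α, IsOpen (chart α)
  chart_cover : ∀ q : Q, ∃ α, q ∈ chart α
  φ : ι → Q → V
  φ_cont : ∀ α, ContinuousOn (φ α) (chart α)
  φ_inj : ∀ α, Set.InjOn (φ α) (chart α)
  φ_open : ∀ α, ∀ U : Set Q, U ⊆ chart α → IsOpen U →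
      ∃ W : Set V, IsOpen W ∧ φ α '' U = W ∩ φ α '' chart α
  transition : ∀ α β : ι, ∀ x ∈ chart α ∩ chart β,
      ∀ᶠ y in nhdsWithin x (chart α ∩ chart β), φ α y - φ β y = φ α x - φ β x

namespace ParallelSpace

variable {V : Type*} {Q : Type*} [NormedAddCommGroup V] [NormedSpace ℝ V]
  [TopologicalSpace Q]

def LocallyConvex (P : ParallelSpace V Q) : Prop :=
  ∀ α, Convex ℝ (P.φ α '' P.chart α)

def Polyhedral (P : ParallelSpace V Q) : Prop :=
  ∀ α, ∃ (V' : Set V) (m : ℕ) (f : Fin m → V →ₗ[ℝ] ℝ),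
    IsOpen V' ∧ Convex ℝ V' ∧
    P.φ α '' P.chart α = {v ∈ V' | ∀ j, 0 ≤ f j v}

def IsMotion (P : ParallelSpace V Q) (v : V) (I : Set ℝ) (γ : ℝ → Q) : Prop :=
  I.OrdConnected ∧ ContinuousOn γ I ∧
    ∀ α, ∀ J : Set ℝ, J ⊆ I → J.OrdConnected → (∀ t ∈ J, γ t ∈ P.chart α) →
      ∀ s ∈ J, ∀ t ∈ J, P.φ α (γ t) = P.φ α (γ s) + (t - s) • v

def maxInterval (P : ParallelSpace V Q) (v : V) (s : ℝ) (p : Q) : Set ℝ :=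
  ⋃₀ {I : Set ℝ | s ∈ I ∧ ∃ γ : ℝ → Q, P.IsMotion v I γ ∧ γ s = p}

def Dom (P : ParallelSpace V Q) : Set (V × Q) :=
  {x : V × Q | (1 : ℝ) ∈ P.maxInterval x.1 0 x.2}

def DomAt (P : ParallelSpace V Q) (p : Q) : Set V :=
  {v : V | (v, p) ∈ P.Dom}

open Classical in
noncomputable def trans (P : ParallelSpace V Q) (p : Q) (v : V) : Q :=
  if h : ∃ γ : ℝ → Q, P.IsMotion v (Set.Icc 0 1) γ ∧ γ 0 = p then h.choose 1 else p

def entRel (P : ParallelSpace V Q) (V₀ : Set V) : Set (Q × Q) :=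
  {x : Q × Q | ∃ α, x.1 ∈ P.chart α ∧ x.2 ∈ P.chart α ∧ P.φ α x.1 - P.φ α x.2 ∈ V₀}

def IsCompleteP (P : ParallelSpace V Q) : Prop :=
  ∀ F : Filter Q, F.NeBot →
    (∀ V₀ ∈ nhds (0 : V), ∃ S ∈ F, ∀ p ∈ S, ∀ q ∈ S, (p, q) ∈ P.entRel V₀) →
    ∃ x : Q, F ≤ nhds x

def LocalHomeoAt (P : ParallelSpace V Q) (p : Q) (v : V) : Prop :=
  ∃ U₀ : Set V, IsOpen U₀ ∧ v ∈ U₀ ∧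
    Set.InjOn (P.trans p) (U₀ ∩ P.DomAt p) ∧
    ContinuousOn (P.trans p) (U₀ ∩ P.DomAt p) ∧
    IsOpen (P.trans p '' (U₀ ∩ P.DomAt p)) ∧
    ∀ W : Set V, IsOpen W → IsOpen (P.trans p '' (W ∩ U₀ ∩ P.DomAt p))

end ParallelSpace

theorem exists_Icc_mem_nhdsWithin {α : Type*} [LinearOrder α] [TopologicalSpace α]
    [OrderTopology α] {I : Set α} {t : α} (ht : t ∈ I) :
    ∃ a ∈ I, ∃ b ∈ I, a ≤ t ∧ t ≤ b ∧ Icc a b ∈ 𝓝[I] t := by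
  obtain ⟨a, haI, hat, ha⟩ : ∃ a ∈ I, a ≤ t ∧ ∀ᶠ u in 𝓝[I] t, a ≤ u := by
    by_cases h : ∃ a ∈ I, a < t
    · obtain ⟨a, haI, hat⟩ := h
      exact ⟨a, haI, hat.le,
        eventually_nhdsWithin_of_eventually_nhds ((eventually_gt_nhds hat).mono fun _ ↦ le_of_lt)⟩
    · simp only [not_exists, not_and, not_lt] at h
      exact ⟨t, ht, le_rfl, eventually_nhdsWithin_of_forall h⟩
  obtain ⟨b, hbI, htb, hb⟩ : ∃ b ∈ I, t ≤ b ∧ ∀ᶠ u in 𝓝[I] t, u ≤ b := by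
    by_cases h : ∃ b ∈ I, t < b
    · obtain ⟨b, hbI, htb⟩ := h
      exact ⟨b, hbI, htb.le,
        eventually_nhdsWithin_of_eventually_nhds ((eventually_lt_nhds htb).mono fun _ ↦ le_of_lt)⟩
    · simp only [not_exists, not_and, not_lt] at h
      exact ⟨t, ht, le_rfl, eventually_nhdsWithin_of_forall h⟩
  exact ⟨a, haI, b, hbI, hat, htb, ha.and hb⟩

namespace ParallelSpace

variable {V Q : Type*} [NormedAddCommGroup V] [NormedSpace ℝ V] [TopologicalSpace Q]
  {P : ParallelSpace V Q} {v : V} {I J : Set ℝ} {γ δ : ℝ → Q}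

theorem IsMotion.mono (h : P.IsMotion v I γ) (hJI : J ⊆ I) (hJ : J.OrdConnected) :
    P.IsMotion v J γ :=
  ⟨hJ, h.2.1.mono hJI, fun α K hKJ hK hKα ↦ h.2.2 α K (hKJ.trans hJI) hK hKα⟩

theorem IsMotion.congr (h : P.IsMotion v I γ) (hγδ : EqOn γ δ I) : P.IsMotion v I δ := by
  refine ⟨h.1, h.2.1.congr hγδ.symm, fun α K hKI hK hKα a ha b hb ↦ ?_⟩
  have hKα' : ∀ t ∈ K, γ t ∈ P.chart α := fun t ht ↦ hγδ (hKI ht) ▸ hKα t ht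
  rw [← hγδ (hKI ha), ← hγδ (hKI hb)]
  exact h.2.2 α K hKI hK hKα' a ha b hb

theorem isMotion_singleton (v : V) (s : ℝ) (p : Q) : P.IsMotion v {s} fun _ ↦ p := by
  refine ⟨ordConnected_singleton, continuousOn_const, fun α K hK _ _ a ha b hb ↦ ?_⟩
  obtain rfl : a = s := hK ha
  obtain rfl : b = a := hK hb
  simp

theorem IsMotion.eventually_mem_chart_and_φ_eq (h : P.IsMotion v I γ) {x : ℝ} (hx : x ∈ I) {α : P.ι}
    (hα : γ x ∈ P.chart α) :
    ∀ᶠ u in 𝓝[I] x, γ u ∈ P.chart α ∧ P.φ α (γ u) = P.φ α (γ x) + (u - x) • v := by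
  obtain ⟨ε, hε, hball⟩ := Metric.mem_nhdsWithin_iff.1
    (h.2.1 x hx ((P.chart_open α).mem_nhds hα))
  have hK : (Metric.ball x ε ∩ I).OrdConnected := by
    rw [Real.ball_eq_Ioo]
    exact ordConnected_Ioo.inter h.1
  have hxK : x ∈ Metric.ball x ε ∩ I := ⟨Metric.mem_ball_self hε, hx⟩
  filter_upwards [mem_nhdsWithin_of_mem_nhds (Metric.ball_mem_nhds x hε), self_mem_nhdsWithin]
    with u hu_ball huI
  exact ⟨hball ⟨hu_ball, huI⟩,
    h.2.2 α _ inter_subset_right hK (fun t ht ↦ hball ht) x hxK u ⟨hu_ball, huI⟩⟩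

theorem IsMotion.eventuallyEq_of_eq (h₁ : P.IsMotion v I γ) (h₂ : P.IsMotion v J δ) {x : ℝ}
    (hx : x ∈ I ∩ J) (hγδ : γ x = δ x) : γ =ᶠ[𝓝[I ∩ J] x] δ := by
  obtain ⟨α, hα⟩ := P.chart_cover (γ x)
  filter_upwards [nhdsWithin_mono x inter_subset_left (h₁.eventually_mem_chart_and_φ_eq hx.1 hα),
    nhdsWithin_mono x inter_subset_right (h₂.eventually_mem_chart_and_φ_eq hx.2 (hγδ ▸ hα))]
    with u ⟨hγu, hγ⟩ ⟨hδu, hδ⟩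
  exact P.φ_inj α hγu hδu (by rw [hγ, hδ, hγδ])

theorem IsMotion.eqOn_inter [T2Space Q] (h₁ : P.IsMotion v I γ) (h₂ : P.IsMotion v J δ)
    {s : ℝ} (hs : s ∈ I ∩ J) (hγδ : γ s = δ s) : EqOn γ δ (I ∩ J) := by
  -- agreement is open by injectivity of the charts, disagreement by the Hausdorff property
  have hlocal : ∀ x ∈ I ∩ J, ∀ᶠ y in 𝓝[I ∩ J] x, (γ x = δ x ↔ γ y = δ y) := by
    intro x hx
    by_cases hx' : γ x = δ x
    · filter_upwards [h₁.eventuallyEq_of_eq h₂ hx hx'] with y hy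
      simp [hx', hy]
    · have hc : Tendsto (fun y ↦ (γ y, δ y)) (𝓝[I ∩ J] x) (𝓝 (γ x, δ x)) :=
        ((h₁.2.1 x hx.1).mono inter_subset_left).prodMk_nhds
          ((h₂.2.1 x hx.2).mono inter_subset_right)
      filter_upwards [hc.eventually (isClosed_diagonal.isOpen_compl.mem_nhds hx')] with y hy
      simp only [mem_diagonal_iff] at hy
      simp [hx', hy]
  exact fun t ht ↦ ((h₁.1.inter h₂.1).isPreconnected.induction₂ _ hlocal
    (fun _ _ _ _ _ _ ↦ Iff.trans) (fun _ _ _ _ ↦ Iff.symm) hs ht).1 hγδ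

theorem IsMotion.Icc_union_Icc {a b c : ℝ} (h₁ : P.IsMotion v (Icc a b) γ)
    (h₂ : P.IsMotion v (Icc b c) γ) (hab : a ≤ b) (hbc : b ≤ c) :
    P.IsMotion v (Icc a c) γ := by
  refine ⟨ordConnected_Icc, Icc_union_Icc_eq_Icc hab hbc ▸
    h₁.2.1.union_of_isClosed h₂.2.1 isClosed_Icc isClosed_Icc, ?_⟩
  intro α J hJ hJord hJα
  have left : ∀ x ∈ J, ∀ y ∈ J, x ≤ b → y ≤ b →
      P.φ α (γ y) = P.φ α (γ x) + (y - x) • v := fun x hx y hy hxb hyb ↦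
    h₁.2.2 α (J ∩ Icc a b) inter_subset_right (hJord.inter ordConnected_Icc)
      (fun t ht ↦ hJα t ht.1) x ⟨hx, (hJ hx).1, hxb⟩ y ⟨hy, (hJ hy).1, hyb⟩
  have right : ∀ x ∈ J, ∀ y ∈ J, b ≤ x → b ≤ y →
      P.φ α (γ y) = P.φ α (γ x) + (y - x) • v := fun x hx y hy hbx hby ↦
    h₂.2.2 α (J ∩ Icc b c) inter_subset_right (hJord.inter ordConnected_Icc)
      (fun t ht ↦ hJα t ht.1) x ⟨hx, hbx, (hJ hx).2⟩ y ⟨hy, hby, (hJ hy).2⟩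
  intro x hx y hy
  wlog hxy : x ≤ y generalizing x y
  · linear_combination (norm := module) -this y hy x hx (le_of_not_ge hxy)
  rcases le_total y b with hyb | hby
  · exact left x hx y hy (hxy.trans hyb) hyb
  rcases le_total b x with hbx | hxb
  · exact right x hx y hy hbx hby
  have hbJ : b ∈ J := hJord.out hx hy ⟨hxb, hby⟩
  linear_combination (norm := module) left x hx b hbJ hxb le_rfl + right b hbJ y hy le_rfl hby

theorem isMotion_of_forall_uIcc (hI : I.OrdConnected)
    (h : ∀ a ∈ I, ∀ b ∈ I, P.IsMotion v (uIcc a b) γ) : P.IsMotion v I γ := by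
  refine ⟨hI, fun t ht ↦ ?_, fun α J hJI hJ hJα x hx y hy ↦ ?_⟩
  · obtain ⟨a, ha, b, hb, hat, htb, hab⟩ := exists_Icc_mem_nhdsWithin ht
    have hm := h a ha b hb
    rw [uIcc_of_le (hat.trans htb)] at hm
    exact (hm.2.1 t ⟨hat, htb⟩).mono_of_mem_nhdsWithin hab
  · exact (h x (hJI hx) y (hJI hy)).2.2 α (J ∩ uIcc x y) inter_subset_right
      (hJ.inter ordConnected_uIcc) (fun t ht ↦ hJα t ht.1) x ⟨hx, left_mem_uIcc⟩
      y ⟨hy, right_mem_uIcc⟩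

theorem mem_maxInterval {s : ℝ} {p : Q} {t : ℝ} :
    t ∈ P.maxInterval v s p ↔ ∃ I γ, P.IsMotion v I γ ∧ s ∈ I ∧ γ s = p ∧ t ∈ I := by
  simp only [maxInterval, mem_sUnion]
  grind

theorem IsMotion.subset_maxInterval {s : ℝ} (h : P.IsMotion v I γ) (hs : s ∈ I) :
    I ⊆ P.maxInterval v s (γ s) :=
  fun _ ht ↦ mem_maxInterval.2 ⟨I, γ, h, hs, rfl, ht⟩

theorem self_mem_maxInterval (v : V) (s : ℝ) (p : Q) : s ∈ P.maxInterval v s p :=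
  (isMotion_singleton v s p).subset_maxInterval rfl rfl

theorem maxInterval_ordConnected (v : V) (s : ℝ) (p : Q) :
    (P.maxInterval v s p).OrdConnected :=
  isPreconnected_iff_ordConnected.1 <| isPreconnected_sUnion s _ (fun _ hI ↦ hI.1)
    fun _ ⟨_, _, hγ, _⟩ ↦ hγ.1.isPreconnected

open Classical in
noncomputable def maxMotion (P : ParallelSpace V Q) (v : V) (s : ℝ) (p : Q) (t : ℝ) : Q :=
  if h : ∃ d : Set ℝ × (ℝ → Q), P.IsMotion v d.1 d.2 ∧ s ∈ d.1 ∧ d.2 s = p ∧ t ∈ d.1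
  then h.choose.2 t else p

variable [T2Space Q]

theorem IsMotion.maxMotion_eqOn {s : ℝ} {p : Q} (h : P.IsMotion v I γ) (hs : s ∈ I)
    (hp : γ s = p) : EqOn (P.maxMotion v s p) γ I := by
  intro t ht
  have hex : ∃ d : Set ℝ × (ℝ → Q), P.IsMotion v d.1 d.2 ∧ s ∈ d.1 ∧ d.2 s = p ∧ t ∈ d.1 :=
    ⟨(I, γ), h, hs, hp, ht⟩
  obtain ⟨hm, hsd, hpd, htd⟩ := hex.choose_spec
  rw [maxMotion, dif_pos hex]
  exact hm.eqOn_inter h ⟨hsd, hs⟩ (hpd.trans hp.symm) ⟨htd, ht⟩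

theorem maxMotion_self (v : V) (s : ℝ) (p : Q) : P.maxMotion v s p s = p :=
  (isMotion_singleton v s p).maxMotion_eqOn rfl rfl rfl

theorem isMotion_maxMotion_uIcc {s t : ℝ} {p : Q} (ht : t ∈ P.maxInterval v s p) :
    P.IsMotion v (uIcc s t) (P.maxMotion v s p) := by
  obtain ⟨I, γ, h, hs, hp, ht⟩ := mem_maxInterval.1 ht
  have hsub : uIcc s t ⊆ I := h.1.uIcc_subset hs ht
  exact (h.mono hsub ordConnected_uIcc).congr ((h.maxMotion_eqOn hs hp).mono hsub).symm

theorem isMotion_maxMotion (v : V) (s : ℝ) (p : Q) :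
    P.IsMotion v (P.maxInterval v s p) (P.maxMotion v s p) := by
  refine isMotion_of_forall_uIcc (maxInterval_ordConnected v s p) fun a ha b hb ↦ ?_
  wlog hab : a ≤ b generalizing a b
  · exact uIcc_comm a b ▸ this b hb a ha (le_of_not_ge hab)
  rw [uIcc_of_le hab]
  rcases le_total s a with hsa | has
  · exact (isMotion_maxMotion_uIcc hb).mono
      (uIcc_of_le (hsa.trans hab) ▸ Icc_subset_Icc_left hsa) ordConnected_Icc
  rcases le_total b s with hbs | hsb
  · exact (isMotion_maxMotion_uIcc ha).mono
      (uIcc_of_ge (hab.trans hbs) ▸ Icc_subset_Icc_right hbs) ordConnected_Icc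
  · exact (uIcc_of_ge has ▸ isMotion_maxMotion_uIcc ha).Icc_union_Icc
      (uIcc_of_le hsb ▸ isMotion_maxMotion_uIcc hb) has hsb

end ParallelSpace

theorem maximal_motion_general {V : Type*} [NormedAddCommGroup V] [NormedSpace ℝ V]
    {Q : Type*} [TopologicalSpace Q] [T2Space Q]
    (P : ParallelSpace V Q) (v : V) (s : ℝ) (p : Q) :
    s ∈ P.maxInterval v s p ∧ (P.maxInterval v s p).OrdConnected ∧
    ∃ γ : ℝ → Q, P.IsMotion v (P.maxInterval v s p) γ ∧ γ s = p ∧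
      (∀ (I : Set ℝ) (δ : ℝ → Q), P.IsMotion v I δ → s ∈ I → δ s = p →
        I ⊆ P.maxInterval v s p ∧ ∀ t ∈ I, δ t = γ t) ∧
      (∀ γ' : ℝ → Q, P.IsMotion v (P.maxInterval v s p) γ' → γ' s = p →
        ∀ t ∈ P.maxInterval v s p, γ' t = γ t) := by
  refine ⟨P.self_mem_maxInterval v s p, P.maxInterval_ordConnected v s p, P.maxMotion v s p,
    P.isMotion_maxMotion v s p, P.maxMotion_self v s p, fun I δ hδ hs hp ↦ ?_,
    fun γ' hγ' hp t ht ↦ (hγ'.maxMotion_eqOn (P.self_mem_maxInterval v s p) hp ht).symm⟩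
  exact ⟨hp ▸ hδ.subset_maxInterval hs, fun t ht ↦ (hδ.maxMotion_eqOn hs hp ht).symm⟩

/-- the set `I^v_{s,p}` is an interval containing `s`, and it carries a unique
maximal motion with constant velocity `v` taking the value `p` at time `s`, which extends
every motion with constant velocity `v` defined on an interval containing `s` and equal to
`p` at `s`. -/
theorem maximal_motion {V : Type*} [NormedAddCommGroup V] [NormedSpace ℝ V]
    [FiniteDimensional ℝ V] {Q : Type*} [TopologicalSpace Q] [T2Space Q]
    (P : ParallelSpace V Q) (v : V) (s : ℝ) (p : Q) :
    s ∈ P.maxInterval v s p ∧ (P.maxInterval v s p).OrdConnected ∧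
    ∃ γ : ℝ → Q, P.IsMotion v (P.maxInterval v s p) γ ∧ γ s = p ∧
      (∀ (I : Set ℝ) (δ : ℝ → Q), P.IsMotion v I δ → s ∈ I → δ s = p →
        I ⊆ P.maxInterval v s p ∧ ∀ t ∈ I, δ t = γ t) ∧
      (∀ γ' : ℝ → Q, P.IsMotion v (P.maxInterval v s p) γ' → γ' s = p →
        ∀ t ∈ P.maxInterval v s p, γ' t = γ t) :=
  maximal_motion_general P v s p
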